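/- Every function f in the Barron space B is Lipschitz on Ω with Lipschitz constant at most D_1 ‖σ‖_Lip ‖f‖_B: for all x, x' ∈ Ω, |f(x) − f(x')| ≤ D_1 ‖σ‖_Lip ‖f‖_B ‖x − x'‖. -/

import Mathlib

open MeasureTheory ENNReal

noncomputable section

abbrev Vec (N : ℕ) := Fin N → ℝ

abbrev Param (N : ℕ) := Vec N × Vec N × Vec N

/-- componentwise ReLU -/
def relu {N : ℕ} (x : Vec N) : Vec N := fun i => max (x i) 0

/-- graph convolution defined via the orthogonal matrix `U` -/
def conv {N : ℕ} (U : Matrix (Fin N) (Fin N) ℝ) (b x : Vec N) : Vec N :=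
  U.mulVec (U.transpose.mulVec b * U.transpose.mulVec x)

/-- The data and standing assumptions of the graph Barron space setting. -/
structure Setting (N : ℕ) where
  U : Matrix (Fin N) (Fin N) ℝ
  W : Submodule ℝ (Vec N)
  dom : Set (Vec N)
  nrm : Vec N → ℝ
  conorm : Vec N → ℝ
  hN : 1 ≤ N
  hU : U.transpose * U = 1
  hdomc : IsCompact dom
  hdomne : dom.Nonempty
  nrm_add : ∀ x y, nrm (x + y) ≤ nrm x + nrm y
  nrm_smul : ∀ (t : ℝ) (x), nrm (t • x) = |t| * nrm x
  nrm_eq_zero : ∀ x, nrm x = 0 ↔ x = 0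
  relu_nrm_le : ∀ x, nrm (relu x) ≤ nrm x
  conorm_add : ∀ b b', b ∈ W → b' ∈ W → conorm (b + b') ≤ conorm b + conorm b'
  conorm_smul : ∀ (t : ℝ) (b), b ∈ W → conorm (t • b) = |t| * conorm b
  conorm_eq_zero : ∀ b, b ∈ W → (conorm b = 0 ↔ b = 0)
  conv_nrm_le : ∀ b ∈ W, ∀ x ∈ dom, nrm (conv U b x) ≤ conorm b

namespace Setting

variable {N : ℕ} (S : Setting N)

/-- dual norm `‖a‖_* = sup {aᵀx : ‖x‖ ≤ 1}` -/
def dual (a : Vec N) : ℝ :=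
  sSup {t : ℝ | ∃ x : Vec N, S.nrm x ≤ 1 ∧ t = ∑ i, a i * x i}

/-- the neuron `aᵀ σ(b*x + c)` -/
def neuron (x : Vec N) (p : Param N) : ℝ :=
  ∑ i, p.1 i * relu (conv S.U p.2.1 x + p.2.2) i

/-- `P_f`: probability measures on `ℝ^N × W × ℝ^N` representing `f` on `Ω`. -/
def reps (f : Vec N → ℝ) : Set (Measure (Param N)) :=
  {ρ | IsProbabilityMeasure ρ ∧ ρ {p : Param N | p.2.1 ∉ S.W} = 0 ∧
    ∀ x ∈ S.dom, Integrable (S.neuron x) ρ ∧ f x = ∫ p, S.neuron x p ∂ρ}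

/-- the weight `‖a‖_* (‖b‖_co + ‖c‖)` -/
def weight (p : Param N) : ℝ := S.dual p.1 * (S.conorm p.2.1 + S.nrm p.2.2)

def cost (ρ : Measure (Param N)) : ℝ≥0∞ :=
  ∫⁻ p, ENNReal.ofReal (S.weight p) ∂ρ

/-- the Barron norm `‖f‖_{B_1} ∈ [0,∞]` -/
def barron (f : Vec N → ℝ) : ℝ≥0∞ :=
  ⨅ ρ ∈ S.reps f, S.cost ρ

/-- membership in the Barron space `B = B_1` -/
def memB (f : Vec N → ℝ) : Prop :=
  (S.reps f).Nonempty ∧ S.barron f < ⊤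

/-- `(a,b,c)` lies in `S × T` -/
def onST (p : Param N) : Prop :=
  S.dual p.1 = 1 ∧ p.2.1 ∈ S.W ∧ S.conorm p.2.1 + S.nrm p.2.2 = 1

/-- output of the shallow GCNN with parameters `θ` -/
def netOut {M : ℕ} (θ : Fin M → Param N) (x : Vec N) : ℝ :=
  (M : ℝ)⁻¹ * ∑ m, S.neuron x (θ m)

/-- the `p`-path norm, `1 ≤ p ≤ ∞` -/
def pathNorm {M : ℕ} (p : ℝ≥0∞) (θ : Fin M → Param N) : ℝ :=
  if p = ⊤ then ⨆ m, S.weight (θ m)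
  else ((M : ℝ)⁻¹ * ∑ m, S.weight (θ m) ^ p.toReal) ^ (p.toReal)⁻¹

/-- the class `C_{Q,p}` of GCNN outputs with `p`-path norm at most `Q` -/
def CQp (Q : ℝ) (p : ℝ≥0∞) : Set (Vec N → ℝ) :=
  {g | ∃ M : ℕ, 1 ≤ M ∧ ∃ θ : Fin M → Param N,
    (∀ m, (θ m).2.1 ∈ S.W) ∧ S.pathNorm p θ ≤ Q ∧ ∀ x ∈ S.dom, g x = S.netOut θ x}

end Setting

/-! ### Auxiliary machinery -/

/-- type synonym for `Vec N` carrying the norm `S.nrm` -/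
def NBVec {N : ℕ} (_S : Setting N) : Type := Vec N

namespace NBVec

variable {N : ℕ} (S : Setting N)

instance : AddCommGroup (NBVec S) := inferInstanceAs (AddCommGroup (Vec N))
instance : Module ℝ (NBVec S) := inferInstanceAs (Module ℝ (Vec N))

noncomputable instance : NormedAddCommGroup (NBVec S) :=
  AddGroupNorm.toNormedAddCommGroup
  { toFun := fun x => S.nrm x
    map_zero' := (S.nrm_eq_zero 0).2 rfl
    add_le' := S.nrm_add
    neg' := fun x => by have := S.nrm_smul (-1) (show Vec N from x); rw [neg_one_smul, abs_neg, abs_one, one_mul] at this; exact this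
    eq_zero_of_map_eq_zero' := fun x h => (S.nrm_eq_zero x).1 h }

instance : NormedSpace ℝ (NBVec S) :=
  { norm_smul_le := fun t x => le_of_eq (S.nrm_smul t x) }

instance : FiniteDimensional ℝ (NBVec S) :=
  inferInstanceAs (FiniteDimensional ℝ (Vec N))

end NBVec

namespace Setting

variable {N : ℕ} (S : Setting N)

lemma nrm_zero : S.nrm 0 = 0 := (S.nrm_eq_zero 0).2 rfl

lemma nrm_neg (x : Vec N) : S.nrm (-x) = S.nrm x := by
  have := S.nrm_smul (-1) x; simpa using this

lemma nrm_nonneg (x : Vec N) : 0 ≤ S.nrm x := by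
  have h := S.nrm_add x (-x)
  rw [add_neg_cancel, S.nrm_zero, S.nrm_neg] at h
  linarith

lemma conorm_nonneg (b : Vec N) (hb : b ∈ S.W) : 0 ≤ S.conorm b := by
  have h := S.conorm_add b (-b) hb (neg_mem hb)
  have h2 : S.conorm (-b) = S.conorm b := by
    have := S.conorm_smul (-1) b hb; simpa using this
  rw [add_neg_cancel, (S.conorm_eq_zero 0 (zero_mem _)).2 rfl, h2] at h
  linarith

lemma exists_nrm_bound : ∃ C : ℝ, 0 ≤ C ∧ ∀ x : Vec N, ‖x‖ ≤ C * S.nrm x := by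
  let g : NBVec S →ₗ[ℝ] Vec N :=
    { toFun := fun x => x, map_add' := fun _ _ => rfl, map_smul' := fun _ _ => rfl }
  let G := LinearMap.toContinuousLinearMap g
  exact ⟨‖G‖, norm_nonneg _, fun x => by exact G.le_opNorm x⟩

lemma dualSet_bddAbove (a : Vec N) :
    BddAbove {t : ℝ | ∃ x : Vec N, S.nrm x ≤ 1 ∧ t = ∑ i, a i * x i} := by
  obtain ⟨C, hC0, hC⟩ := S.exists_nrm_bound
  refine ⟨(∑ i, |a i|) * C, ?_⟩
  rintro t ⟨x, hx, rfl⟩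
  have hsum : ∑ i, a i * x i ≤ (∑ i, |a i|) * ‖x‖ := by
    rw [Finset.sum_mul]
    refine Finset.sum_le_sum fun i _ => ?_
    calc a i * x i ≤ |a i * x i| := le_abs_self _
      _ = |a i| * |x i| := abs_mul _ _
      _ ≤ |a i| * ‖x‖ := by
          refine mul_le_mul_of_nonneg_left ?_ (abs_nonneg _)
          simpa [Real.norm_eq_abs] using norm_le_pi_norm x i
  have hx2 : ‖x‖ ≤ C := by
    calc ‖x‖ ≤ C * S.nrm x := hC x
      _ ≤ C * 1 := mul_le_mul_of_nonneg_left hx hC0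
      _ = C := mul_one C
  calc ∑ i, a i * x i ≤ (∑ i, |a i|) * ‖x‖ := hsum
    _ ≤ (∑ i, |a i|) * C :=
        mul_le_mul_of_nonneg_left hx2 (Finset.sum_nonneg fun i _ => abs_nonneg _)

lemma zero_mem_dualSet (a : Vec N) :
    (0 : ℝ) ∈ {t : ℝ | ∃ x : Vec N, S.nrm x ≤ 1 ∧ t = ∑ i, a i * x i} :=
  ⟨0, by simp [S.nrm_zero]⟩

lemma dual_nonneg (a : Vec N) : 0 ≤ S.dual a :=
  le_csSup (S.dualSet_bddAbove a) (S.zero_mem_dualSet a)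

lemma sum_le_dual_mul (a y : Vec N) : ∑ i, a i * y i ≤ S.dual a * S.nrm y := by
  by_cases hy : S.nrm y = 0
  · have hy0 : y = 0 := (S.nrm_eq_zero y).1 hy
    subst hy0
    simp [S.nrm_zero]
  · have hy0 : 0 < S.nrm y := lt_of_le_of_ne (S.nrm_nonneg y) (Ne.symm hy)
    have hmem : (∑ i, a i * ((S.nrm y)⁻¹ • y) i)
        ∈ {t : ℝ | ∃ x : Vec N, S.nrm x ≤ 1 ∧ t = ∑ i, a i * x i} := by
      refine ⟨(S.nrm y)⁻¹ • y, ?_, rfl⟩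
      rw [S.nrm_smul]
      rw [abs_of_nonneg (inv_nonneg.2 hy0.le)]
      rw [inv_mul_cancel₀ hy]
    have hle := le_csSup (S.dualSet_bddAbove a) hmem
    have heq : ∑ i, a i * ((S.nrm y)⁻¹ • y) i = (S.nrm y)⁻¹ * ∑ i, a i * y i := by
      rw [Finset.mul_sum]
      exact Finset.sum_congr rfl fun i _ => by simp [Pi.smul_apply, smul_eq_mul]; ring
    rw [heq] at hle
    have := mul_le_mul_of_nonneg_left hle hy0.le
    rw [← mul_assoc, mul_inv_cancel₀ hy, one_mul] at this
    calc ∑ i, a i * y i ≤ S.nrm y * S.dual a := this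
      _ = S.dual a * S.nrm y := mul_comm _ _

lemma abs_sum_le_dual_mul (a y : Vec N) : |∑ i, a i * y i| ≤ S.dual a * S.nrm y := by
  refine abs_le.mpr ⟨?_, S.sum_le_dual_mul a y⟩
  have h := S.sum_le_dual_mul a (-y)
  have : ∑ i, a i * (-y) i = -(∑ i, a i * y i) := by
    simp [← Finset.sum_neg_distrib, mul_comm]
  rw [this, S.nrm_neg] at h
  linarith

lemma conv_sub (b x x' : Vec N) :
    conv S.U b (x - x') = conv S.U b x - conv S.U b x' := by
  simp [conv, Matrix.mulVec_sub, mul_sub]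

lemma neuron_diff_le (σLip D1 : ℝ) (hσLip : 0 < σLip) (hD1 : 0 < D1)
    (hlip : ∀ x y : Vec N, S.nrm (relu x - relu y) ≤ σLip * S.nrm (x - y))
    (hco : ∀ b ∈ S.W, ∀ x ∈ S.dom, ∀ x' ∈ S.dom,
      S.nrm (conv S.U b (x - x')) ≤ D1 * S.conorm b * S.nrm (x - x'))
    (x x' : Vec N) (hx : x ∈ S.dom) (hx' : x' ∈ S.dom)
    (p : Param N) (hb : p.2.1 ∈ S.W) :
    |S.neuron x p - S.neuron x' p|
      ≤ D1 * σLip * S.nrm (x - x') * S.weight p := by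
  obtain ⟨a, b, c⟩ := p
  set X := conv S.U b x + c with hX
  set Y := conv S.U b x' + c with hY
  set y := relu X - relu Y with hy
  have hXY : X - Y = conv S.U b (x - x') := by
    rw [hX, hY, S.conv_sub b x x']
    abel
  have hdiff : S.neuron x (a, b, c) - S.neuron x' (a, b, c) = ∑ i, a i * y i := by
    simp only [neuron, hy, Pi.sub_apply, mul_sub, Finset.sum_sub_distrib]
    rfl
  have h1 : |∑ i, a i * y i| ≤ S.dual a * S.nrm y := S.abs_sum_le_dual_mul a y
  have h2 : S.nrm y ≤ σLip * S.nrm (conv S.U b (x - x')) := by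
    rw [hy, ← hXY]; exact hlip X Y
  have h3 : S.nrm (conv S.U b (x - x')) ≤ D1 * S.conorm b * S.nrm (x - x') :=
    hco b hb x hx x' hx'
  have hd0 : 0 ≤ S.dual a := S.dual_nonneg a
  have hc0 : 0 ≤ S.nrm c := S.nrm_nonneg c
  have hcb0 : 0 ≤ S.conorm b := S.conorm_nonneg b hb
  have hn0 : 0 ≤ S.nrm (x - x') := S.nrm_nonneg _
  have hny0 : 0 ≤ S.nrm y := S.nrm_nonneg y
  rw [hdiff]
  have step1 : S.dual a * S.nrm y ≤ S.dual a * (σLip * (D1 * S.conorm b * S.nrm (x - x'))) := by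
    refine mul_le_mul_of_nonneg_left ?_ hd0
    calc S.nrm y ≤ σLip * S.nrm (conv S.U b (x - x')) := h2
      _ ≤ σLip * (D1 * S.conorm b * S.nrm (x - x')) :=
          mul_le_mul_of_nonneg_left h3 hσLip.le
  refine h1.trans (step1.trans ?_)
  have : S.weight (a, b, c) = S.dual a * (S.conorm b + S.nrm c) := rfl
  rw [this]
  nlinarith [mul_nonneg hd0 hc0, mul_nonneg (mul_nonneg hD1.le hσLip.le) hn0,
    mul_nonneg (mul_nonneg (mul_nonneg hD1.le hσLip.le) hn0) (mul_nonneg hd0 hc0)]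

end Setting

/-- functions in the Barron space are Lipschitz with constant
`D₁ ‖σ‖_Lip ‖f‖_B`. -/
theorem barron_lipschitz {N : ℕ} (S : Setting N) (σLip D1 : ℝ)
    (hσLip : 0 < σLip) (hD1 : 0 < D1)
    (hlip : ∀ x y : Vec N, S.nrm (relu x - relu y) ≤ σLip * S.nrm (x - y))
    (hco : ∀ b ∈ S.W, ∀ x ∈ S.dom, ∀ x' ∈ S.dom,
      S.nrm (conv S.U b (x - x')) ≤ D1 * S.conorm b * S.nrm (x - x'))
    (f : Vec N → ℝ) (hf : S.memB f) :
    ∀ x ∈ S.dom, ∀ x' ∈ S.dom,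
      |f x - f x'| ≤ D1 * σLip * (S.barron f).toReal * S.nrm (x - x') := by
  intro x hx x' hx'
  by_cases hnz : S.nrm (x - x') = 0
  · have hxx : x = x' := sub_eq_zero.mp ((S.nrm_eq_zero _).1 hnz)
    rw [hxx]
    simp [sub_self, S.nrm_zero]
  · have hn0 : 0 < S.nrm (x - x') := lt_of_le_of_ne (S.nrm_nonneg _) (Ne.symm hnz)
    set K := D1 * σLip * S.nrm (x - x') with hKdef
    have hK0 : 0 < K := by positivity
    refine le_of_forall_pos_le_add fun ε hε => ?_
    have hBtop : S.barron f ≠ ⊤ := hf.2.ne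
    have hlt : S.barron f < S.barron f + ENNReal.ofReal (ε / K) :=
      ENNReal.lt_add_right hBtop (by
        simp only [ne_eq, ENNReal.ofReal_eq_zero, not_le]
        positivity)
    have hlt' : ⨅ ρ ∈ S.reps f, S.cost ρ < S.barron f + ENNReal.ofReal (ε / K) := hlt
    obtain ⟨ρ, hr⟩ := iInf_lt_iff.mp hlt'
    obtain ⟨hρmem, hρlt⟩ := iInf_lt_iff.mp hr
    have hbound_ne : S.barron f + ENNReal.ofReal (ε / K) ≠ ⊤ :=
      ENNReal.add_ne_top.mpr ⟨hBtop, ENNReal.ofReal_ne_top⟩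
    have hcost_ne : S.cost ρ ≠ ⊤ := ne_top_of_lt hρlt
    -- integrability and representation
    have hintx := (hρmem.2.2 x hx).1
    have hintx' := (hρmem.2.2 x' hx').1
    have hfx := (hρmem.2.2 x hx).2
    have hfx' := (hρmem.2.2 x' hx').2
    set g : Param N → ℝ := fun p => S.neuron x p - S.neuron x' p with hg
    have hgint : Integrable g ρ := hintx.sub hintx'
    have hrepr : f x - f x' = ∫ p, g p ∂ρ := by
      rw [hfx, hfx', ← integral_sub hintx hintx']
    have hae : ∀ᵐ p ∂ρ, p.2.1 ∈ S.W := by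
      rw [ae_iff]
      exact hρmem.2.1
    -- the key lintegral estimate
    have hptwise : ∀ᵐ p ∂ρ, ENNReal.ofReal ‖g p‖
        ≤ ENNReal.ofReal K * ENNReal.ofReal (S.weight p) := by
      refine hae.mono fun p hp => ?_
      rw [← ENNReal.ofReal_mul hK0.le]
      refine ENNReal.ofReal_le_ofReal ?_
      rw [Real.norm_eq_abs]
      exact S.neuron_diff_le σLip D1 hσLip hD1 hlip hco x x' hx hx' p hp
    have hlint : ∫⁻ p, ENNReal.ofReal ‖g p‖ ∂ρ ≤ ENNReal.ofReal K * S.cost ρ := by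
      calc ∫⁻ p, ENNReal.ofReal ‖g p‖ ∂ρ
          ≤ ∫⁻ p, ENNReal.ofReal K * ENNReal.ofReal (S.weight p) ∂ρ :=
            lintegral_mono_ae hptwise
        _ = ENNReal.ofReal K * ∫⁻ p, ENNReal.ofReal (S.weight p) ∂ρ :=
            lintegral_const_mul' _ _ ENNReal.ofReal_ne_top
        _ = ENNReal.ofReal K * S.cost ρ := rfl
    have hKcost_ne : ENNReal.ofReal K * S.cost ρ ≠ ⊤ :=
      ENNReal.mul_ne_top ENNReal.ofReal_ne_top hcost_ne
    have hmain : |f x - f x'| ≤ K * (S.cost ρ).toReal := by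
      rw [hrepr, ← Real.norm_eq_abs]
      calc ‖∫ p, g p ∂ρ‖ ≤ (∫⁻ p, ENNReal.ofReal ‖g p‖ ∂ρ).toReal :=
            norm_integral_le_lintegral_norm g
        _ ≤ (ENNReal.ofReal K * S.cost ρ).toReal :=
            ENNReal.toReal_mono hKcost_ne hlint
        _ = K * (S.cost ρ).toReal := by
            rw [ENNReal.toReal_mul, ENNReal.toReal_ofReal hK0.le]
    have hcostR : (S.cost ρ).toReal ≤ (S.barron f).toReal + ε / K := by
      have h1 : (S.cost ρ).toReal ≤ (S.barron f + ENNReal.ofReal (ε / K)).toReal :=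
        ENNReal.toReal_mono hbound_ne hρlt.le
      rwa [ENNReal.toReal_add hBtop ENNReal.ofReal_ne_top,
        ENNReal.toReal_ofReal (by positivity)] at h1
    calc |f x - f x'| ≤ K * (S.cost ρ).toReal := hmain
      _ ≤ K * ((S.barron f).toReal + ε / K) :=
          mul_le_mul_of_nonneg_left hcostR hK0.le
      _ = D1 * σLip * (S.barron f).toReal * S.nrm (x - x') + ε := by
          field_simp
          ring
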